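/- Let ε > 0, ε̄ > 0, σ > 0, Δτ > 0 and b, x, x_k ∈ ℝ. Set a = √(1 + 2εσ²Δτ), α = a/(σ√(2Δτ)) and β = (σ²Δτ − x − 2εσ²Δτ·x_k)/(a·σ√(2Δτ)). Then the integral I_{v,1} = −∫_ℝ [1 − (1/(2ε̄))(1 − erf(ξ + b))] · exp(−ε(ξ − x_k)² − (x − ξ)²/(2σ²Δτ) − ξ)/(σ√(2πΔτ)) dξ admits the closed form I_{v,1} = −(1 − 1/(2ε̄))·I₁ − (1/(2ε̄))·I₂, where I₁ = (1/a)·exp(σ²Δτ/2 − x)·exp(−ε(x − σ²Δτ − x_k)²/a²) and I₂ = I₁ · erf((αb − β)/√(1 + α²)). (Proposition 1 of the paper.) -/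

import Mathlib

/-
Completing the square turns the tilted heat kernel times the RBF into a constant times e^{-(αξ+β)²},
so I_{v,1} splits into ∫ e^{-(αξ+β)²} = √π/α and ∫ erf(ξ+b) e^{-(αξ+β)²}. As a function of
the shift b, the latter has derivative (2/√π) ∫ e^{-(ξ+b)²} e^{-(αξ+β)²}, again a Gaussian
integral, which matches the derivative of (√π/α) erf((αb-β)/√(1+α²)); both sides vanish at
b = β/α because erf is odd.
-/

open Real MeasureTheory

noncomputable def erf (x : ℝ) : ℝ :=
  (2 / Real.sqrt π) * ∫ t in (0 : ℝ)..x, Real.exp (-t ^ 2)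

open Filter Metric

lemma integrable_exp_neg_sq_affine {α : ℝ} (hα : α ≠ 0) (β : ℝ) :
    Integrable fun ξ : ℝ => exp (-(α * ξ + β) ^ 2) := by
  have h := (integrable_exp_neg_mul_sq one_pos).comp_add_right β
  simp only [neg_mul, one_mul] at h
  exact h.comp_mul_left' hα

lemma integral_exp_neg_sq_affine {α : ℝ} (hα : 0 < α) (β : ℝ) :
    ∫ ξ : ℝ, exp (-(α * ξ + β) ^ 2) = √π / α := by
  have h := integral_gaussian 1
  simp only [neg_mul, one_mul, div_one] at h
  rw [Measure.integral_comp_mul_left (fun y => exp (-(y + β) ^ 2)),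
    integral_add_right_eq_self (fun y => exp (-y ^ 2)), h, abs_of_pos (inv_pos.2 hα),
    smul_eq_mul, inv_mul_eq_div]

lemma hasDerivAt_erf (x : ℝ) : HasDerivAt erf (2 / √π * exp (-x ^ 2)) x := by
  have hcont : Continuous fun t : ℝ => exp (-t ^ 2) := by fun_prop
  exact (intervalIntegral.integral_hasDerivAt_right (hcont.intervalIntegrable _ _)
    (hcont.stronglyMeasurableAtFilter _ _) hcont.continuousAt).const_mul _

lemma continuous_erf : Continuous erf :=
  continuous_iff_continuousAt.2 fun x => (hasDerivAt_erf x).continuousAt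

lemma erf_neg (x : ℝ) : erf (-x) = -erf x := by
  have h := intervalIntegral.integral_comp_neg (a := 0) (b := x) fun t : ℝ => exp (-t ^ 2)
  simp only [neg_zero, even_two, Even.neg_pow] at h
  rw [erf, erf, intervalIntegral.integral_symm, ← h, mul_neg]

lemma erf_mem_Icc {x : ℝ} (hx : 0 ≤ x) : erf x ∈ Set.Icc 0 1 := by
  have hpos : ∀ t : ℝ, 0 ≤ exp (-t ^ 2) := fun t => (exp_pos _).le
  have hIoi : IntegrableOn (fun t : ℝ => exp (-t ^ 2)) (Set.Ioi 0) := by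
    simpa using (integrable_exp_neg_mul_sq one_pos).integrableOn
  have hle : ∫ t in (0 : ℝ)..x, exp (-t ^ 2) ≤ √π / 2 := by
    have hhalf : ∫ t in Set.Ioi (0 : ℝ), exp (-t ^ 2) = √π / 2 := by
      simpa using integral_gaussian_Ioi 1
    rw [intervalIntegral.integral_of_le hx, ← hhalf]
    exact setIntegral_mono_set hIoi (Eventually.of_forall hpos)
      Set.Ioc_subset_Ioi_self.eventuallyLE
  have hnonneg : 0 ≤ ∫ t in (0 : ℝ)..x, exp (-t ^ 2) :=
    intervalIntegral.integral_nonneg hx fun t _ => hpos t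
  refine ⟨by unfold erf; positivity, ?_⟩
  calc erf x ≤ 2 / √π * (√π / 2) := by unfold erf; gcongr
    _ = 1 := by field_simp

lemma abs_erf_le_one (x : ℝ) : |erf x| ≤ 1 := by
  obtain ⟨h0, h1⟩ | ⟨h0, h1⟩ :=
    (le_total 0 x).imp erf_mem_Icc (erf_mem_Icc ∘ neg_nonneg.2)
  all_goals rw [abs_le]; constructor <;> linarith [erf_neg x]

lemma integrable_erf_add_mul {g : ℝ → ℝ} (hg : Integrable g) (t : ℝ) :
    Integrable fun u => erf (u + t) * g u :=
  hg.bdd_mul (c := 1) (continuous_erf.comp (continuous_add_const t)).aestronglyMeasurable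
    (Eventually.of_forall fun u => abs_erf_le_one (u + t))

lemma hasDerivAt_integral_erf_add_mul {g : ℝ → ℝ} (hg : Integrable g) (t : ℝ) :
    HasDerivAt (fun s => ∫ u, erf (u + s) * g u)
      (∫ u, 2 / √π * exp (-(u + t) ^ 2) * g u) t := by
  have hmeas : ∀ s : ℝ, AEStronglyMeasurable (fun u => erf (u + s) * g u) volume :=
    fun s => (integrable_erf_add_mul hg s).aestronglyMeasurable
  have hbound : ∀ᵐ u, ∀ s ∈ ball t 1,
      ‖2 / √π * exp (-(u + s) ^ 2) * g u‖ ≤ 2 / √π * ‖g u‖ :=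
    Eventually.of_forall fun u s _ => by
      rw [norm_mul, norm_mul, norm_of_nonneg (by positivity : (0 : ℝ) ≤ 2 / √π),
        norm_of_nonneg (exp_pos _).le]
      gcongr
      exact mul_le_of_le_one_right (by positivity) (exp_le_one_iff.2 (by nlinarith))
  have hderiv : ∀ᵐ u, ∀ s ∈ ball t 1, HasDerivAt (fun s => erf (u + s) * g u)
      (2 / √π * exp (-(u + s) ^ 2) * g u) s :=
    Eventually.of_forall fun u s _ => by
      simpa using (((hasDerivAt_erf (u + s)).comp s ((hasDerivAt_id s).const_add u)).mul_const
        (g u))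
  exact (hasDerivAt_integral_of_dominated_loc_of_deriv_le (ball_mem_nhds t one_pos)
    (Eventually.of_forall hmeas) (integrable_erf_add_mul hg t)
    ((continuous_exp.comp (by fun_prop)).aestronglyMeasurable.const_mul _ |>.mul
      hg.aestronglyMeasurable) hbound (hg.norm.const_mul _) hderiv).2

lemma integral_exp_neg_sq_add_mul_exp_neg_mul_sq (α t : ℝ) :
    ∫ u, exp (-(u + t) ^ 2) * exp (-(α * u) ^ 2)
      = √π / √(1 + α ^ 2) * exp (-(α * t / √(1 + α ^ 2)) ^ 2) := by
  have hs : 0 < √(1 + α ^ 2) := sqrt_pos.2 (by positivity)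
  have hs2 : √(1 + α ^ 2) ^ 2 = 1 + α ^ 2 := sq_sqrt (by positivity)
  have hsplit : ∀ u, exp (-(u + t) ^ 2) * exp (-(α * u) ^ 2)
      = exp (-(√(1 + α ^ 2) * u + t / √(1 + α ^ 2)) ^ 2) *
          exp (-(α * t / √(1 + α ^ 2)) ^ 2) := by
    intro u
    rw [← exp_add, ← exp_add]
    congr 1
    field_simp
    rw [hs2]
    ring
  simp_rw [hsplit]
  rw [integral_mul_const, integral_exp_neg_sq_affine hs]

lemma integral_erf_add_mul_exp_neg_mul_sq {α : ℝ} (hα : 0 < α) (t : ℝ) :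
    ∫ u, erf (u + t) * exp (-(α * u) ^ 2) = √π / α * erf (α * t / √(1 + α ^ 2)) := by
  have hg : Integrable fun u : ℝ => exp (-(α * u) ^ 2) := by
    simpa using integrable_exp_neg_sq_affine hα.ne' 0
  set F := fun t => ∫ u, erf (u + t) * exp (-(α * u) ^ 2)
  set G := fun t => √π / α * erf (α * t / √(1 + α ^ 2))
  set D := fun t => 2 / √(1 + α ^ 2) * exp (-(α * t / √(1 + α ^ 2)) ^ 2)
  have hF : ∀ t, HasDerivAt F (D t) t := by
    intro t
    convert hasDerivAt_integral_erf_add_mul hg t using 1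
    simp_rw [mul_assoc]
    rw [integral_const_mul, integral_exp_neg_sq_add_mul_exp_neg_mul_sq]
    simp only [D]
    field_simp
  have hG : ∀ t, HasDerivAt G (D t) t := by
    intro t
    refine (((hasDerivAt_erf _).comp t (((hasDerivAt_id' t).const_mul α).div_const
      √(1 + α ^ 2))).const_mul (√π / α)).congr_deriv ?_
    simp only [D]
    field_simp
  have hF0 : F 0 = 0 := by
    have hodd : F 0 = -F 0 := by
      simp only [F, add_zero]
      rw [← integral_neg, ← integral_neg_eq_self]
      simp [erf_neg]
    linarith
  have hG0 : G 0 = 0 := by simp [G, erf]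
  have hconst := is_const_of_deriv_eq_zero (fun t => ((hF t).sub (hG t)).differentiableAt)
    (fun t => ((hF t).sub (hG t)).deriv.trans (sub_self _)) t 0
  simp only [Pi.sub_apply, hF0, hG0, sub_zero] at hconst
  exact sub_eq_zero.1 hconst

lemma integral_erf_add_mul_exp_neg_sq_affine {α : ℝ} (hα : 0 < α) (β b : ℝ) :
    ∫ ξ, erf (ξ + b) * exp (-(α * ξ + β) ^ 2)
      = √π / α * erf ((α * b - β) / √(1 + α ^ 2)) := by
  have hshift : ∀ ξ, erf (ξ + b) * exp (-(α * ξ + β) ^ 2)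
      = erf (ξ + β / α + (b - β / α)) * exp (-(α * (ξ + β / α)) ^ 2) := by
    intro ξ
    rw [add_add_sub_cancel, mul_add, mul_div_cancel₀ _ hα.ne']
  simp_rw [hshift]
  rw [integral_add_right_eq_self (fun u => erf (u + (b - β / α)) * exp (-(α * u) ^ 2)),
    integral_erf_add_mul_exp_neg_mul_sq hα]
  congr 3
  field_simp

lemma tilted_heat_exponent_eq {ε σ Δτ a S : ℝ} (hσ : σ ≠ 0) (ha : a ≠ 0) (hS : S ≠ 0)
    (ha2 : a ^ 2 = 1 + 2 * ε * σ ^ 2 * Δτ) (hS2 : S ^ 2 = 2 * Δτ) (x x_k ξ : ℝ) :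
    -ε * (ξ - x_k) ^ 2 - (x - ξ) ^ 2 / (2 * σ ^ 2 * Δτ) - ξ
      = -(a / (σ * S) * ξ + (σ ^ 2 * Δτ - x - 2 * ε * σ ^ 2 * Δτ * x_k) / (a * σ * S)) ^ 2
        + (σ ^ 2 * Δτ / 2 - x + -ε * (x - σ ^ 2 * Δτ - x_k) ^ 2 / a ^ 2) := by
  have hΔτ : Δτ ≠ 0 := by rintro rfl; simp_all
  field_simp
  rw [hS2, ha2]
  ring

theorem Iv1_closed_form_general
    (ε εbar σ Δτ b x x_k : ℝ)
    (hε : 0 < ε) (hσ : 0 < σ) (hΔτ : 0 < Δτ) :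
    let a := Real.sqrt (1 + 2 * ε * σ ^ 2 * Δτ)
    let α := a / (σ * Real.sqrt (2 * Δτ))
    let β := (σ ^ 2 * Δτ - x - 2 * ε * σ ^ 2 * Δτ * x_k) / (a * σ * Real.sqrt (2 * Δτ))
    let I1 := (1 / a) * Real.exp (σ ^ 2 * Δτ / 2 - x) *
        Real.exp (-ε * (x - σ ^ 2 * Δτ - x_k) ^ 2 / a ^ 2)
    let I2 := I1 * erf ((α * b - β) / Real.sqrt (1 + α ^ 2));
    -(∫ ξ : ℝ,
        (1 - (1 / (2 * εbar)) * (1 - erf (ξ + b))) *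
          (Real.exp (-ε * (ξ - x_k) ^ 2 - (x - ξ) ^ 2 / (2 * σ ^ 2 * Δτ) - ξ) /
            (σ * Real.sqrt (2 * π * Δτ))))
      = -(1 - 1 / (2 * εbar)) * I1 - (1 / (2 * εbar)) * I2 := by
  intro a α β I1 I2
  have ha : 0 < a := sqrt_pos.2 (by positivity)
  have hS : 0 < √(2 * Δτ) := sqrt_pos.2 (by positivity)
  have hα : 0 < α := by positivity
  set c := 1 / (2 * εbar)
  set L := σ ^ 2 * Δτ / 2 - x + -ε * (x - σ ^ 2 * Δτ - x_k) ^ 2 / a ^ 2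
  set D := σ * √(2 * π * Δτ)
  have hI1 : exp L / D * (√π / α) = I1 := by
    simp only [I1, α, L, D, exp_add]
    rw [show 2 * π * Δτ = π * (2 * Δτ) by ring, sqrt_mul pi_pos.le]
    field_simp
  have hsplit : ∀ ξ, (1 - c * (1 - erf (ξ + b))) *
      (exp (-ε * (ξ - x_k) ^ 2 - (x - ξ) ^ 2 / (2 * σ ^ 2 * Δτ) - ξ) / D)
      = (1 - c) * (exp L / D) * exp (-(α * ξ + β) ^ 2)
        + c * (exp L / D) * (erf (ξ + b) * exp (-(α * ξ + β) ^ 2)) := by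
    intro ξ
    have hexp : -ε * (ξ - x_k) ^ 2 - (x - ξ) ^ 2 / (2 * σ ^ 2 * Δτ) - ξ
        = -(α * ξ + β) ^ 2 + L :=
      tilted_heat_exponent_eq hσ.ne' ha.ne' hS.ne' (sq_sqrt (by positivity))
        (sq_sqrt (by positivity)) x x_k ξ
    rw [hexp, exp_add]
    ring
  have hg := integrable_exp_neg_sq_affine hα.ne' β
  simp only [hsplit, I2]
  rw [integral_add (hg.const_mul _) ((integrable_erf_add_mul hg b).const_mul _),
    integral_const_mul, integral_const_mul, integral_exp_neg_sq_affine hα,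
    integral_erf_add_mul_exp_neg_sq_affine hα, ← hI1]
  ring

/-- Proposition 1: closed form for the integral `I_{v,1}`. -/
theorem Iv1_closed_form
    (ε εbar σ Δτ b x x_k : ℝ)
    (hε : 0 < ε) (hεbar : 0 < εbar) (hσ : 0 < σ) (hΔτ : 0 < Δτ) :
    let a := Real.sqrt (1 + 2 * ε * σ ^ 2 * Δτ)
    let α := a / (σ * Real.sqrt (2 * Δτ))
    let β := (σ ^ 2 * Δτ - x - 2 * ε * σ ^ 2 * Δτ * x_k) / (a * σ * Real.sqrt (2 * Δτ))
    let I1 := (1 / a) * Real.exp (σ ^ 2 * Δτ / 2 - x) *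
        Real.exp (-ε * (x - σ ^ 2 * Δτ - x_k) ^ 2 / a ^ 2)
    let I2 := I1 * erf ((α * b - β) / Real.sqrt (1 + α ^ 2));
    -(∫ ξ : ℝ,
        (1 - (1 / (2 * εbar)) * (1 - erf (ξ + b))) *
          (Real.exp (-ε * (ξ - x_k) ^ 2 - (x - ξ) ^ 2 / (2 * σ ^ 2 * Δτ) - ξ) /
            (σ * Real.sqrt (2 * π * Δτ))))
      = -(1 - 1 / (2 * εbar)) * I1 - (1 / (2 * εbar)) * I2 :=
  Iv1_closed_form_general ε εbar σ Δτ b x x_k hε hσ hΔτ
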